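/- (Lemma B.1 of the paper.) Let x ∈ ℕ and let W ⊆ V be either a connected pair or an x-generable set. Then some vertex of W is reachable in D[W] from every other vertex of W. -/

import Mathlib

open Set

variable {V : Type*}

/-- One arc step within the induced subgraph on the vertex set `S`. -/
def StepIn (A : V → V → Prop) (S : Set V) (u v : V) : Prop :=
  u ∈ S ∧ v ∈ S ∧ A u v

/-- `v` is reachable from `u` by a directed path in the induced subgraph on `S`
(every vertex is reachable from itself, provided it lies in `S`). -/
def ReachIn (A : V → V → Prop) (S : Set V) (u v : V) : Prop :=
  u ∈ S ∧ Relation.ReflTransGen (StepIn A S) u v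

/-- `IN(X)`: the set of vertices from which some member of `X` is reachable,
computed in the induced subgraph on `S`. -/
def InSet (A : V → V → Prop) (S : Set V) (X : Set V) : Set V :=
  {u | ∃ x ∈ X, ReachIn A S u x}

/-- `Z` is dynamically partitioning with respect to `X` and `Y`:
`IN(X) ∩ IN(Y) = ∅` computed in the induced subgraph `D − Z`. -/
def DynPart (A : V → V → Prop) (X Y Z : Set V) : Prop :=
  InSet A Zᶜ X ∩ InSet A Zᶜ Y = ∅

/-- `StepsLe r n u v`: `v` can be reached from `u` in at most `n` `r`-steps. -/
def StepsLe (r : V → V → Prop) : ℕ → V → V → Prop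
  | 0, u, v => u = v
  | n + 1, u, v => u = v ∨ ∃ w, r u w ∧ StepsLe r n w v

/-- `v` is reachable from `u` by a directed path using at most `n` arcs
in the induced subgraph on `S`. -/
def ReachInLe (A : V → V → Prop) (S : Set V) (n : ℕ) (u v : V) : Prop :=
  u ∈ S ∧ StepsLe (StepIn A S) n u v

/-- `IN_a(X)` computed in the induced subgraph on `S`. -/
def InSetLe (A : V → V → Prop) (S : Set V) (a : ℕ) (X : Set V) : Set V :=
  {u | ∃ x ∈ X, ReachInLe A S a u x}

/-- The vertex `i` is cycle-partitioning at order `x` with respect to `X` and `Y`: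
`IN_a(X) ∩ IN_b(Y) = ∅` in `D − {i}` for all `a + b = x`. -/
def CyclePart (A : V → V → Prop) (X Y : Set V) (i : V) (x : ℕ) : Prop :=
  ∀ a b : ℕ, a + b = x → InSetLe A {i}ᶜ a X ∩ InSetLe A {i}ᶜ b Y = ∅

/-- One adjacency step of the underlying (simple) graph of `D[W]`. -/
def UStep (A : V → V → Prop) (W : Set V) (u v : V) : Prop :=
  u ∈ W ∧ v ∈ W ∧ u ≠ v ∧ (A u v ∨ A v u)

/-- The underlying graph of `D[W]` is connected. -/
def UConnected (A : V → V → Prop) (W : Set V) : Prop :=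
  W.Nonempty ∧ ∀ u ∈ W, ∀ v ∈ W, Relation.ReflTransGen (UStep A W) u v

/-- The underlying graph of `D[W]` is biconnected: at least 3 vertices, connected,
and deleting any single vertex leaves a connected graph. -/
def Biconnected (A : V → V → Prop) (W : Set V) : Prop :=
  3 ≤ W.ncard ∧ UConnected A W ∧ ∀ v ∈ W, UConnected A (W \ {v})

/-- `D[W]` is a directed sub-block: some vertex of `W` is reachable in `D[W]` from
every other vertex of `W`, and the underlying graph of `D[W]` is biconnected. -/
def DirectedSubBlock (A : V → V → Prop) (W : Set V) : Prop :=
  (∃ i ∈ W, ∀ j ∈ W, ReachIn A W j i) ∧ Biconnected A W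

/-- A directed sub-block is a transmission block iff it is maximal. -/
def TransmissionBlock (A : V → V → Prop) (W : Set V) : Prop :=
  DirectedSubBlock A W ∧ ∀ U : Set V, W ⊂ U → ¬ DirectedSubBlock A U

/-- A connected pair: a two-element set `{i, j}` with an arc between `i` and `j`. -/
def ConnectedPair (A : V → V → Prop) (W : Set V) : Prop :=
  ∃ i j : V, i ≠ j ∧ W = {i, j} ∧ (A i j ∨ A j i)

/-- `W'` is obtained from `W` by one exact generation step. -/
def ExactStep (A : V → V → Prop) (W W' : Set V) : Prop :=
  ∃ k, k ∉ W ∧ W' = W ∪ {k} ∧ ∃ j ∈ W, A k j ∧ ¬ DynPart A {k} (W \ {j}) {j}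

/-- `W` is the last term of a finite chain of exact generation steps whose
first term is a connected pair. -/
def GeneratedFromPair (A : V → V → Prop) (W : Set V) : Prop :=
  ∃ P : Set V, ConnectedPair A P ∧ Relation.ReflTransGen (ExactStep A) P W

/-- `W'` is obtained from `W` by one order-`x` cycle generation step. -/
def CycleStep (A : V → V → Prop) (x : ℕ) (W W' : Set V) : Prop :=
  ∃ k, k ∉ W ∧ W' = W ∪ {k} ∧ ∃ j ∈ W, A k j ∧ ¬ CyclePart A {k} (W \ {j}) j x

/-- `W` is the last term of a finite chain of order-`x` cycle generation steps
whose first term is a connected pair. -/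
def XGenerable (A : V → V → Prop) (x : ℕ) (W : Set V) : Prop :=
  ∃ P : Set V, ConnectedPair A P ∧ Relation.ReflTransGen (CycleStep A x) P W

/-! Induction along the generation chain: a vertex reachable from every vertex of `W` stays
reachable from every vertex of `W ∪ {k}`, since the step supplies an arc from `k` into `W`. -/

section Reachability

variable {A : V → V → Prop}

theorem ReachIn.mono {S T : Set V} (hST : S ⊆ T) {u v : V} (h : ReachIn A S u v) :
    ReachIn A T u v :=
  ⟨hST h.1, Relation.ReflTransGen.mono (fun _ _ ⟨hu, hv, huv⟩ => ⟨hST hu, hST hv, huv⟩) _ _ h.2⟩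

theorem ReachIn.head {S : Set V} {u v w : V} (hu : u ∈ S) (hv : v ∈ S) (huv : A u v)
    (h : ReachIn A S v w) : ReachIn A S u w :=
  ⟨hu, .head ⟨hu, hv, huv⟩ h.2⟩

def IsReachedFromAll (A : V → V → Prop) (W : Set V) (i : V) : Prop :=
  i ∈ W ∧ ∀ j ∈ W, ReachIn A W j i

theorem isReachedFromAll_singleton (i : V) : IsReachedFromAll A {i} i :=
  ⟨rfl, fun _ hj => hj ▸ ⟨rfl, .refl⟩⟩

theorem IsReachedFromAll.insert_of_arc {W : Set V} {i j k : V} (hi : IsReachedFromAll A W i)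
    (hj : j ∈ W) (hkj : A k j) : IsReachedFromAll A (insert k W) i := by
  have hsub : W ⊆ insert k W := Set.subset_insert k W
  refine ⟨hsub hi.1, ?_⟩
  rintro u (rfl | hu)
  · exact ReachIn.head (Set.mem_insert u W) (hsub hj) hkj ((hi.2 j hj).mono hsub)
  · exact (hi.2 u hu).mono hsub

theorem ConnectedPair.exists_isReachedFromAll {W : Set V} (hW : ConnectedPair A W) :
    ∃ i, IsReachedFromAll A W i := by
  obtain ⟨i, j, -, rfl, hij | hji⟩ := hW
  · exact ⟨j, (isReachedFromAll_singleton j).insert_of_arc rfl hij⟩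
  · exact ⟨i, Set.pair_comm i j ▸ (isReachedFromAll_singleton i).insert_of_arc rfl hji⟩

theorem CycleStep.isReachedFromAll {x : ℕ} {W W' : Set V} {i : V} (hstep : CycleStep A x W W')
    (hi : IsReachedFromAll A W i) : IsReachedFromAll A W' i := by
  obtain ⟨k, -, rfl, j, hj, hkj, -⟩ := hstep
  rw [Set.union_singleton]
  exact hi.insert_of_arc hj hkj

theorem XGenerable.exists_isReachedFromAll {x : ℕ} {W : Set V} (hW : XGenerable A x W) :
    ∃ i, IsReachedFromAll A W i := by
  obtain ⟨P, hP, hchain⟩ := hW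
  obtain ⟨i, hi⟩ := hP.exists_isReachedFromAll
  exact ⟨i, hchain.rec hi fun _ hstep ih => hstep.isReachedFromAll ih⟩

end Reachability

theorem stmt12_general (A : V → V → Prop)
    (x : ℕ) (W : Set V)
    (h : ConnectedPair A W ∨ (3 ≤ W.ncard ∧ XGenerable A x W)) :
    ∃ i ∈ W, ∀ j ∈ W, ReachIn A W j i := by
  obtain ⟨i, hiW, hreach⟩ : ∃ i, IsReachedFromAll A W i := by
    rcases h with hW | ⟨-, hW⟩
    · exact hW.exists_isReachedFromAll
    · exact hW.exists_isReachedFromAll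
  exact ⟨i, hiW, hreach⟩

/-- Lemma B.1. -/
theorem stmt12 [Fintype V] (A : V → V → Prop) (hirr : ∀ v : V, ¬ A v v)
    (x : ℕ) (W : Set V)
    (h : ConnectedPair A W ∨ (3 ≤ W.ncard ∧ XGenerable A x W)) :
    ∃ i ∈ W, ∀ j ∈ W, ReachIn A W j i :=
  stmt12_general A x W h
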